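/- arXiv:1904.11821 — 4 statements merged into one kernel-verified Lean document; each statement's English description precedes it below -/
import Mathlib

section
/- Let A be an associative commutative algebra over a field k and φ: A → A an algebra automorphism. Then the set Der_φ(A) of φ-derivations of A, equipped with the bracket [D₁,D₂]_φ = φ∘D₁∘φ⁻¹∘D₂∘φ⁻¹ − φ∘D₂∘φ⁻¹∘D₁∘φ⁻¹ and the twist map ψ_φ(D) = φ∘D∘φ⁻¹, is a Hom-Lie algebra: the bracket is bilinear, skew-symmetric, ψ_φ is multiplicative with respect to the bracket, and the Hom-Jacobi identity [ψ_φ(D₁),[D₂,D₃]_φ]_φ + [ψ_φ(D₂),[D₃,D₁]_φ]_φ + [ψ_φ(D₃),[D₁,D₂]_φ]_φ = 0 holds. -/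
/-!
Put `E = D ∘ φ⁻¹` and let `c` be conjugation by `φ`, a Lie algebra automorphism of `End A`.
Then `[D₁, D₂]_φ = φ ∘ ⁅E₁, E₂⁆`, so `[D₁, D₂]_φ ∘ φ⁻¹ = c ⁅E₁, E₂⁆` and `ψ_φ(D) ∘ φ⁻¹ = c E`:
along `D ↦ D ∘ φ⁻¹` the triple becomes the Yau twist `(End A, c ∘ ⁅·, ·⁆, c)` of the commutator
Lie algebra, whose Hom-Jacobi identity is `c ∘ c` applied to the Jacobi identity.
Closure: `D ↦ D ∘ φ⁻¹` sends `φ`-derivations to derivations, derivations are closed under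
`⁅·, ·⁆`, and `φ ∘ E` is a `φ`-derivation for every derivation `E`.
-/

variable {k A : Type*} [Field k] [CommRing A] [Algebra k A]

/-- The set of `φ`-derivations of `A`. -/
def phiDer (φ : A ≃ₐ[k] A) : Set (A →ₗ[k] A) :=
  {D | ∀ a b : A, D (a * b) = φ a * D b + D a * φ b}

/-- The twisted bracket `[D₁,D₂]_φ = φ∘D₁∘φ⁻¹∘D₂∘φ⁻¹ − φ∘D₂∘φ⁻¹∘D₁∘φ⁻¹`. -/
def phiBr (φ : A ≃ₐ[k] A) (D1 D2 : A →ₗ[k] A) : A →ₗ[k] A :=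
  φ.toLinearMap ∘ₗ D1 ∘ₗ φ.symm.toLinearMap ∘ₗ D2 ∘ₗ φ.symm.toLinearMap
    - φ.toLinearMap ∘ₗ D2 ∘ₗ φ.symm.toLinearMap ∘ₗ D1 ∘ₗ φ.symm.toLinearMap

/-- The twist map `ψ_φ(D) = φ ∘ D ∘ φ⁻¹`. -/
def phiTw (φ : A ≃ₐ[k] A) (D : A →ₗ[k] A) : A →ₗ[k] A :=
  φ.toLinearMap ∘ₗ D ∘ₗ φ.symm.toLinearMap

theorem LieHom.jacobi_twist {R L : Type*} [CommRing R] [LieRing L] [LieAlgebra R L]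
    (α : L →ₗ⁅R⁆ L) (x y z : L) :
    α ⁅α x, α ⁅y, z⁆⁆ + α ⁅α y, α ⁅z, x⁆⁆ + α ⁅α z, α ⁅x, y⁆⁆ = 0 := by
  simp only [← LieHom.map_lie, ← map_add, lie_jacobi, map_zero]

-- Mathlib makes the commutator Lie ring of an associative ring only a local instance. Stated for
-- algebras, it matches `LieAlgebra.ofAssociativeAlgebra` closely enough for `smul_lie` to rewrite.
instance Module.End.instLieRing {R S : Type*} [CommSemiring R] [Ring S] [Algebra R S] :
    LieRing (Module.End R S) :=
  LieRing.ofAssociativeRing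

section

variable {φ : A ≃ₐ[k] A} {D : A →ₗ[k] A}

theorem exists_derivation_eq_comp_symm (hD : D ∈ phiDer φ) :
    ∃ E : Derivation k A A, (E : A →ₗ[k] A) = D ∘ₗ φ.symm.toLinearMap := by
  refine ⟨Derivation.mk' (D ∘ₗ φ.symm.toLinearMap) fun a b => ?_, rfl⟩
  simpa [smul_eq_mul, mul_comm (D (φ.symm a))] using hD (φ.symm a) (φ.symm b)

theorem comp_derivation_mem_phiDer (E : Derivation k A A) :
    φ.toLinearMap ∘ₗ (E : A →ₗ[k] A) ∈ phiDer φ := by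
  intro a b
  simp [Derivation.leibniz, smul_eq_mul, mul_comm]

end

variable (φ : A ≃ₐ[k] A) (D D1 D2 : A →ₗ[k] A)

theorem phiBr_eq_comp_lie :
    phiBr φ D1 D2 =
      φ.toLinearMap ∘ₗ ⁅(D1 ∘ₗ φ.symm.toLinearMap : Module.End k A), D2 ∘ₗ φ.symm.toLinearMap⁆ := by
  simp only [phiBr, LieRing.of_associative_ring_bracket, Module.End.mul_eq_comp,
    LinearMap.comp_sub, LinearMap.comp_assoc]

theorem phiBr_skew : phiBr φ D1 D2 = -phiBr φ D2 D1 := by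
  rw [phiBr_eq_comp_lie, phiBr_eq_comp_lie, ← lie_skew, LinearMap.comp_neg]

theorem phiBr_add_left (D3 : A →ₗ[k] A) :
    phiBr φ (D1 + D2) D3 = phiBr φ D1 D3 + phiBr φ D2 D3 := by
  simp only [phiBr_eq_comp_lie, LinearMap.add_comp, add_lie, LinearMap.comp_add]

theorem phiBr_add_right (D3 : A →ₗ[k] A) :
    phiBr φ D1 (D2 + D3) = phiBr φ D1 D2 + phiBr φ D1 D3 := by
  simp only [phiBr_eq_comp_lie, LinearMap.add_comp, lie_add, LinearMap.comp_add]

theorem phiBr_smul_left (c : k) : phiBr φ (c • D1) D2 = c • phiBr φ D1 D2 := by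
  rw [phiBr_eq_comp_lie, phiBr_eq_comp_lie, LinearMap.smul_comp, smul_lie, LinearMap.comp_smul]

theorem phiBr_smul_right (c : k) : phiBr φ D1 (c • D2) = c • phiBr φ D1 D2 := by
  rw [phiBr_skew, phiBr_smul_left, ← smul_neg, ← phiBr_skew]

theorem phiBr_comp_symm :
    phiBr φ D1 D2 ∘ₗ φ.symm.toLinearMap =
      φ.toLinearEquiv.lieConj
        ⁅(D1 ∘ₗ φ.symm.toLinearMap : Module.End k A), D2 ∘ₗ φ.symm.toLinearMap⁆ := by
  rw [phiBr_eq_comp_lie, LinearEquiv.lieConj_apply, LinearEquiv.conj_apply]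
  rfl

theorem phiTw_comp_symm :
    phiTw φ D ∘ₗ φ.symm.toLinearMap =
      φ.toLinearEquiv.lieConj (D ∘ₗ φ.symm.toLinearMap : Module.End k A) := by
  rw [LinearEquiv.lieConj_apply, LinearEquiv.conj_apply]
  rfl

theorem comp_symm_injective :
    Function.Injective fun D : A →ₗ[k] A => D ∘ₗ φ.symm.toLinearMap :=
  fun _ _ h => (LinearMap.cancel_right φ.symm.surjective).mp h

theorem phiTw_phiBr : phiTw φ (phiBr φ D1 D2) = phiBr φ (phiTw φ D1) (phiTw φ D2) := by
  apply comp_symm_injective φ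
  simp only [phiTw_comp_symm, phiBr_comp_symm, LieEquiv.map_lie]

theorem phiBr_hom_jacobi (D3 : A →ₗ[k] A) :
    phiBr φ (phiTw φ D1) (phiBr φ D2 D3) + phiBr φ (phiTw φ D2) (phiBr φ D3 D1)
      + phiBr φ (phiTw φ D3) (phiBr φ D1 D2) = 0 := by
  apply comp_symm_injective φ
  simp only [LinearMap.add_comp, LinearMap.zero_comp, phiBr_comp_symm, phiTw_comp_symm]
  exact LieHom.jacobi_twist φ.toLinearEquiv.lieConj.toLieHom _ _ _

theorem phiBr_mem_phiDer {D1 D2 : A →ₗ[k] A} (h1 : D1 ∈ phiDer φ) (h2 : D2 ∈ phiDer φ) :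
    phiBr φ D1 D2 ∈ phiDer φ := by
  obtain ⟨E1, hE1⟩ := exists_derivation_eq_comp_symm h1
  obtain ⟨E2, hE2⟩ := exists_derivation_eq_comp_symm h2
  rw [phiBr_eq_comp_lie, ← hE1, ← hE2, ← Derivation.commutator_coe_linear_map]
  exact comp_derivation_mem_phiDer ⁅E1, E2⁆

/-- `(Der_φ(A), [·,·]_φ, ψ_φ)` is a Hom-Lie algebra: the bracket lands in `Der_φ(A)`,
is bilinear and skew-symmetric, `ψ_φ` is multiplicative, and Hom-Jacobi holds. -/
theorem phiDerivations_form_homLie_algebra (φ : A ≃ₐ[k] A) :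
    (∀ D1 ∈ phiDer φ, ∀ D2 ∈ phiDer φ, phiBr φ D1 D2 ∈ phiDer φ) ∧
    (∀ (D1 D2 D3 : A →ₗ[k] A) (c : k),
      phiBr φ (D1 + D2) D3 = phiBr φ D1 D3 + phiBr φ D2 D3 ∧
      phiBr φ D1 (D2 + D3) = phiBr φ D1 D2 + phiBr φ D1 D3 ∧
      phiBr φ (c • D1) D2 = c • phiBr φ D1 D2 ∧
      phiBr φ D1 (c • D2) = c • phiBr φ D1 D2) ∧
    (∀ D1 D2 : A →ₗ[k] A, phiBr φ D1 D2 = - phiBr φ D2 D1) ∧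
    (∀ D1 D2 : A →ₗ[k] A, phiTw φ (phiBr φ D1 D2) = phiBr φ (phiTw φ D1) (phiTw φ D2)) ∧
    (∀ D1 ∈ phiDer φ, ∀ D2 ∈ phiDer φ, ∀ D3 ∈ phiDer φ,
      phiBr φ (phiTw φ D1) (phiBr φ D2 D3) + phiBr φ (phiTw φ D2) (phiBr φ D3 D1)
        + phiBr φ (phiTw φ D3) (phiBr φ D1 D2) = 0) :=
  ⟨fun _ h1 _ h2 => phiBr_mem_phiDer φ h1 h2,
    fun D1 D2 D3 c => ⟨phiBr_add_left φ D1 D2 D3, phiBr_add_right φ D1 D2 D3,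
      phiBr_smul_left φ D1 D2 c, phiBr_smul_right φ D1 D2 c⟩,
    phiBr_skew φ, phiTw_phiBr φ, fun D1 _ D2 _ D3 _ => phiBr_hom_jacobi φ D1 D2 D3⟩
end

section
/- In a split regular Hom-Lie Rinehart algebra (L,A), if A_α A_β ≠ 0 for weights α, β ∈ Λ ∪ {0}, then α + β ∈ Λ ∪ {0} and A_α A_β ⊆ A_{α+β}. -/
/-- A (regular) Hom-Lie Rinehart algebra structure over `(A, φ)` on an `A`-module `L`. -/
structure HomLieRinehart (k A L : Type*) [Field k] [CommRing A] [Algebra k A]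
    [AddCommGroup L] [Module k L] [Module A L] [IsScalarTower k A L] where
  bracket : L →ₗ[k] L →ₗ[k] L
  φ : A ≃ₐ[k] A
  ψ : L ≃ₗ[k] L
  ρ : L →ₗ[k] (A →ₗ[k] A)
  skew : ∀ x y, bracket x y = - bracket y x
  psi_bracket : ∀ x y, ψ (bracket x y) = bracket (ψ x) (ψ y)
  hom_jacobi : ∀ x y z,
    bracket (ψ x) (bracket y z) + bracket (ψ y) (bracket z x)
      + bracket (ψ z) (bracket x y) = 0
  psi_smul : ∀ (a : A) (x : L), ψ (a • x) = φ a • ψ x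
  rho_deriv : ∀ x (a b : A), ρ x (a * b) = φ a * ρ x b + ρ x a * φ b
  rep : ∀ x y (a : A), ρ (bracket x y) (φ a) = ρ (ψ x) (ρ y a) - ρ (ψ y) (ρ x a)
  rho_psi : ∀ x (a : A), ρ (ψ x) a = φ (ρ x (φ.symm a))
  rho_smul : ∀ (a : A) (x : L) (b : A), ρ (a • x) b = φ a * ρ x b
  leibniz : ∀ x (a : A) y, bracket x (a • y) = φ a • bracket x y + ρ x a • ψ y

namespace HomLieRinehart

variable {k A L : Type*} [Field k] [CommRing A] [Algebra k A]
    [AddCommGroup L] [Module k L] [Module A L] [IsScalarTower k A L]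
variable (R : HomLieRinehart k A L) (H : Submodule k L)

/-- The root space `L_γ` attached to a functional `γ`. -/
def rootSpace (γ : L → k) : Submodule k L where
  carrier := {v | ∀ h ∈ H, R.bracket h v = γ h • R.ψ v}
  add_mem' := by
    intro x y hx hy h hH
    simp [map_add, hx h hH, hy h hH, smul_add]
  zero_mem' := by intro h hH; simp
  smul_mem' := by
    intro c x hx h hH
    rw [map_smul, hx h hH, map_smul, smul_comm]

/-- The weight space `A_α` attached to a functional `α`. -/
def weightSpace (α : L → k) : Submodule k A where
  carrier := {a | ∀ h ∈ H, R.ρ h a = α h • R.φ a}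
  add_mem' := by
    intro x y hx hy h hH
    simp [map_add, hx h hH, hy h hH, smul_add]
  zero_mem' := by intro h hH; simp
  smul_mem' := by
    intro c x hx h hH
    rw [map_smul, hx h hH, map_smul, smul_comm]

/-- The root system `Γ`. -/
def Γset : Set (L → k) := {γ | γ ≠ 0 ∧ R.rootSpace H γ ≠ ⊥}

/-- The weight system `Λ`. -/
def Λset : Set (L → k) := {α | α ≠ 0 ∧ R.weightSpace H α ≠ ⊥}

/-- `±Γ`. -/
def pmΓ : Set (L → k) := {γ | γ ∈ R.Γset H ∨ -γ ∈ R.Γset H}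

/-- `±Λ`. -/
def pmΛ : Set (L → k) := {α | α ∈ R.Λset H ∨ -α ∈ R.Λset H}

/-- `(L, A)` is split with splitting Cartan subalgebra `H`:  `H` is a maximal abelian
subalgebra, `L` is the direct sum of `H` and the root spaces, and `A` is the direct sum
of the weight spaces (which are `φ`-invariant). -/
def IsSplit : Prop :=
  (∀ h ∈ H, ∀ h' ∈ H, R.bracket h h' = 0) ∧
  (∀ v : L, (∀ h ∈ H, R.bracket h v = 0) → v ∈ H) ∧
  iSupIndep (fun o : Option (R.Γset H) => o.elim H fun γ => R.rootSpace H γ.1) ∧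
  (⨆ o : Option (R.Γset H), o.elim H fun γ => R.rootSpace H γ.1) = ⊤ ∧
  iSupIndep (fun o : Option (R.Λset H) =>
    o.elim (R.weightSpace H 0) fun α => R.weightSpace H α.1) ∧
  (⨆ o : Option (R.Λset H), o.elim (R.weightSpace H 0) fun α => R.weightSpace H α.1) = ⊤ ∧
  (∀ α ∈ R.Λset H, ∀ a ∈ R.weightSpace H α, R.φ a ∈ R.weightSpace H α)

/-- The functional `γ ∘ ψ^z`. -/
def tw (γ : L → k) (z : ℤ) : L → k := fun v => γ ((R.ψ ^ z) v)

/-- The twisted partial sum `ζ₁ψ^{-i} + ζ₂ψ^{-i} + ζ₃ψ^{-i+1} + ⋯ + ζ_{i+1}ψ^{-1}`. -/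
def chainSum (ζ : ℕ → L → k) (i : ℕ) : L → k :=
  R.tw (ζ 0) (-(i : ℤ)) + ∑ j ∈ Finset.range i, R.tw (ζ (j + 1)) (-((i : ℤ) - j))

/-- Connection of roots (Definition 3.1). -/
def Connected (γ ξ : L → k) : Prop :=
  (∃ (z : ℤ) (ε : k), (ε = 1 ∨ ε = -1) ∧ ξ = ε • R.tw γ z) ∨
  (∃ (n : ℕ) (ζ : ℕ → L → k),
    (∀ i ≤ n + 1, ζ i ∈ R.pmΛ H ∪ R.pmΓ H) ∧
    (∃ z : ℤ, ζ 0 = R.tw γ z) ∧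
    (∀ i, 1 ≤ i → i ≤ n → R.chainSum ζ i ∈ R.pmΓ H) ∧
    (∃ (m : ℤ) (ε : k), (ε = 1 ∨ ε = -1) ∧
      R.chainSum ζ (n + 1) = ε • R.tw ξ (-m)))

/-- Connection of weights (Definition 4.1). -/
def WConnected (α β : L → k) : Prop :=
  (β = α ∨ β = -α) ∨
  (∃ (n : ℕ) (σ : ℕ → L → k),
    (∀ i ≤ n + 1, σ i ∈ R.pmΛ H ∪ R.pmΓ H) ∧
    σ 0 = α ∧
    (∀ i, 1 ≤ i → i ≤ n → (∑ j ∈ Finset.range (i + 1), σ j) ∈ R.pmΛ H ∪ R.pmΓ H) ∧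
    ((∑ j ∈ Finset.range (n + 2), σ j) = β ∨ (∑ j ∈ Finset.range (n + 2), σ j) = -β))

/-- The connection class `[γ]` of a root `γ`. -/
def connClass (γ : L → k) : Set (L → k) := {ξ ∈ R.Γset H | R.Connected H γ ξ}

/-- The connection class `[α]` of a weight `α`. -/
def wConnClass (α : L → k) : Set (L → k) := {β ∈ R.Λset H | R.WConnected H α β}

/-- `L_{0,S} = Σ_{ξ∈S, −ξ∈Λ} A_{−ξ}L_ξ + Σ_{ξ∈S} [L_{−ξ}, L_ξ]`, for a set `S` of roots. -/
def L0Of (S : Set (L → k)) : Submodule k L :=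
  Submodule.span k
    ({v | ∃ ξ ∈ S, -ξ ∈ R.Λset H ∧
        ∃ a ∈ R.weightSpace H (-ξ), ∃ x ∈ R.rootSpace H ξ, v = a • x} ∪
     {v | ∃ ξ ∈ S, ∃ x ∈ R.rootSpace H (-ξ), ∃ y ∈ R.rootSpace H ξ, v = R.bracket x y})

/-- `L_S = ⊕_{ξ ∈ S} L_ξ`. -/
def LOf (S : Set (L → k)) : Submodule k L := ⨆ ξ ∈ S, R.rootSpace H ξ

/-- `I_S = L_{0,S} ⊕ L_S`. -/
def IOf (S : Set (L → k)) : Submodule k L := R.L0Of H S ⊔ R.LOf H S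

/-- The ideal `I_{[γ]}` associated to the connection class of a root `γ`. -/
def Iclass (γ : L → k) : Submodule k L := R.IOf H (R.connClass H γ)

/-- `A_{0,S} = Σ_{β∈S, −β∈Λ} ρ(L_{−β})(A_β) + Σ_{β∈S} A_{−β}A_β` for a set `S` of weights. -/
def A0Of (S : Set (L → k)) : Submodule k A :=
  Submodule.span k
    ({a | ∃ β ∈ S, -β ∈ R.Λset H ∧
        ∃ x ∈ R.rootSpace H (-β), ∃ b ∈ R.weightSpace H β, a = R.ρ x b} ∪
     {a | ∃ β ∈ S, ∃ b ∈ R.weightSpace H (-β), ∃ c ∈ R.weightSpace H β, a = b * c})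

/-- `A_S = ⊕_{β ∈ S} A_β`. -/
def AOf (S : Set (L → k)) : Submodule k A := ⨆ β ∈ S, R.weightSpace H β

/-- `𝒜_S = A_{0,S} ⊕ A_S`. -/
def calAOf (S : Set (L → k)) : Submodule k A := R.A0Of H S ⊔ R.AOf H S

/-- The ideal `𝒜_{[α]}` associated to the connection class of a weight `α`. -/
def Aclass (α : L → k) : Submodule k A := R.calAOf H (R.wConnClass H α)

/-- `Σ_{γ∈Γ, −γ∈Λ} A_{−γ}L_γ + Σ_{γ∈Γ} [L_{−γ}, L_γ]`, the canonical subspace of `H`. -/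
def HGen : Submodule k L := R.L0Of H (R.Γset H)

/-- An ideal of the Hom-Lie Rinehart algebra `(L, A)`. -/
def IsIdeal (I : Submodule k L) : Prop :=
  (∀ x ∈ I, ∀ y : L, R.bracket x y ∈ I) ∧
  (Submodule.map (R.ψ : L →ₗ[k] L) I = I) ∧
  (∀ (a : A), ∀ x ∈ I, a • x ∈ I) ∧
  (∀ x ∈ I, ∀ (a : A), ∀ y : L, R.ρ x a • y ∈ I)

/-- The center `Z(L)` is trivial. -/
def CenterTrivial : Prop :=
  ∀ v : L, (∀ y : L, R.bracket v y = 0) → (∀ a : A, R.ρ v a = 0) → v = 0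

end HomLieRinehart

open HomLieRinehart

variable {k A L : Type*} [Field k] [CommRing A] [Algebra k A]
    [AddCommGroup L] [Module k L] [Module A L] [IsScalarTower k A L]

namespace HomLieRinehart

variable (R : HomLieRinehart k A L) (H : Submodule k L)

theorem mul_mem_weightSpace_add {α β : L → k} {a b : A}
    (ha : a ∈ R.weightSpace H α) (hb : b ∈ R.weightSpace H β) :
    a * b ∈ R.weightSpace H (α + β) := by
  intro h hH
  calc R.ρ h (a * b) = R.φ a * R.ρ h b + R.ρ h a * R.φ b := R.rho_deriv h a b
    _ = R.φ a * (β h • R.φ b) + (α h • R.φ a) * R.φ b := by rw [ha h hH, hb h hH]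
    _ = (α h + β h) • (R.φ a * R.φ b) := by
      rw [mul_smul_comm, smul_mul_assoc, add_smul, add_comm]
    _ = (α + β) h • R.φ (a * b) := by rw [map_mul, Pi.add_apply]

theorem mem_Λset_of_mem_weightSpace {α : L → k} {a : A} (hα : α ≠ 0)
    (ha : a ∈ R.weightSpace H α) (ha₀ : a ≠ 0) : α ∈ R.Λset H :=
  ⟨hα, (Submodule.ne_bot_iff _).2 ⟨a, ha, ha₀⟩⟩

end HomLieRinehart

theorem mul_weightSpaces_general (R : HomLieRinehart k A L) (H : Submodule k L)
    (α β : L → k)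
    (hne : ∃ a ∈ R.weightSpace H α, ∃ b ∈ R.weightSpace H β, a * b ≠ 0) :
    (α + β = 0 ∨ α + β ∈ R.Λset H) ∧
    ∀ a ∈ R.weightSpace H α, ∀ b ∈ R.weightSpace H β, a * b ∈ R.weightSpace H (α + β) := by
  refine ⟨or_iff_not_imp_left.2 fun hαβ => ?_,
    fun a ha b hb => R.mul_mem_weightSpace_add H ha hb⟩
  obtain ⟨a, ha, b, hb, hab⟩ := hne
  exact R.mem_Λset_of_mem_weightSpace H hαβ (R.mul_mem_weightSpace_add H ha hb) hab

/-- Lemma 2.11(3): if `A_α A_β ≠ 0` then `α + β ∈ Λ ∪ {0}` and `A_α A_β ⊆ A_{α+β}`. -/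
theorem mul_weightSpaces (R : HomLieRinehart k A L) (H : Submodule k L)
    (hs : R.IsSplit H) (α β : L → k)
    (hα : α = 0 ∨ α ∈ R.Λset H) (hβ : β = 0 ∨ β ∈ R.Λset H)
    (hne : ∃ a ∈ R.weightSpace H α, ∃ b ∈ R.weightSpace H β, a * b ≠ 0) :
    (α + β = 0 ∨ α + β ∈ R.Λset H) ∧
    ∀ a ∈ R.weightSpace H α, ∀ b ∈ R.weightSpace H β, a * b ∈ R.weightSpace H (α + β) :=
  mul_weightSpaces_general R H α β hne
end

section
/- In a split regular Hom-Lie Rinehart algebra (L,A), if A_α L_γ ≠ 0 for α ∈ Λ ∪ {0} and γ ∈ Γ ∪ {0}, then α + γ ∈ Γ ∪ {0} and A_α L_γ ⊆ L_{α+γ} (where the product denotes the A-module action on L). -/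
open HomLieRinehart

variable {k A L : Type*} [Field k] [CommRing A] [Algebra k A]
    [AddCommGroup L] [Module k L] [Module A L] [IsScalarTower k A L]

namespace HomLieRinehart

variable {R : HomLieRinehart k A L} {H : Submodule k L}

theorem smul_mem_rootSpace_add {α γ : L → k} {a : A} {x : L}
    (ha : a ∈ R.weightSpace H α) (hx : x ∈ R.rootSpace H γ) :
    a • x ∈ R.rootSpace H (α + γ) := by
  intro h hH
  calc R.bracket h (a • x) = R.φ a • R.bracket h x + R.ρ h a • R.ψ x := R.leibniz h a x
    _ = R.φ a • γ h • R.ψ x + (α h • R.φ a) • R.ψ x := by rw [hx h hH, ha h hH]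
    _ = (α + γ) h • R.ψ (a • x) := by
      rw [R.psi_smul, smul_assoc, smul_comm (R.φ a) (γ h), Pi.add_apply, add_smul, add_comm]

theorem eq_zero_or_mem_Γset_of_mem_rootSpace {γ : L → k} {x : L}
    (hx : x ∈ R.rootSpace H γ) (hx0 : x ≠ 0) : γ = 0 ∨ γ ∈ R.Γset H := by
  by_cases hγ : γ = 0
  · exact Or.inl hγ
  · exact Or.inr ⟨hγ, fun hbot => hx0 (by simpa [hbot] using hx)⟩

end HomLieRinehart

theorem smul_weightSpace_rootSpace_general (R : HomLieRinehart k A L) (H : Submodule k L)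
    (α γ : L → k)
    (hne : ∃ a ∈ R.weightSpace H α, ∃ x ∈ R.rootSpace H γ, a • x ≠ 0) :
    (α + γ = 0 ∨ α + γ ∈ R.Γset H) ∧
    ∀ a ∈ R.weightSpace H α, ∀ x ∈ R.rootSpace H γ, a • x ∈ R.rootSpace H (α + γ) := by
  obtain ⟨a, ha, x, hx, hax⟩ := hne
  exact ⟨eq_zero_or_mem_Γset_of_mem_rootSpace (smul_mem_rootSpace_add ha hx) hax,
    fun _ ha _ hx => smul_mem_rootSpace_add ha hx⟩

/-- Lemma 2.11(4): if `A_α L_γ ≠ 0` then `α + γ ∈ Γ ∪ {0}` and `A_α L_γ ⊆ L_{α+γ}`. -/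
theorem smul_weightSpace_rootSpace (R : HomLieRinehart k A L) (H : Submodule k L)
    (hs : R.IsSplit H) (α γ : L → k)
    (hα : α = 0 ∨ α ∈ R.Λset H) (hγ : γ = 0 ∨ γ ∈ R.Γset H)
    (hne : ∃ a ∈ R.weightSpace H α, ∃ x ∈ R.rootSpace H γ, a • x ≠ 0) :
    (α + γ = 0 ∨ α + γ ∈ R.Γset H) ∧
    ∀ a ∈ R.weightSpace H α, ∀ x ∈ R.rootSpace H γ, a • x ∈ R.rootSpace H (α + γ) :=
  smul_weightSpace_rootSpace_general R H α γ hne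
end

section
/- The connection relation ≈ on the weight system Λ of a split regular Hom-Lie Rinehart algebra, defined by α ≈ β if and only if α is connected to β, is an equivalence relation on Λ. -/
open HomLieRinehart

variable {k A L : Type*} [Field k] [CommRing A] [Algebra k A]
    [AddCommGroup L] [Module k L] [Module A L] [IsScalarTower k A L]

/-! Passing from the summands `σ₀, …, σₙ₊₁` of a connection to its partial sums
`s₀ = α, …, sₙ₊₁ = ±β`, a connection becomes a path whose vertices `s₀, …, sₙ` and steps
`sᵢ₊₁ - sᵢ` all lie in `S = ±Λ ∪ ±Γ`. Since `S = -S`, such paths can be negated, reversed and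
concatenated, which gives symmetry and transitivity. -/

open Finset

section StepPath

variable {G : Type*} [AddCommGroup G] {S : Set G}

def IsStepPath (S : Set G) (n : ℕ) (s : ℕ → G) : Prop :=
  ∀ i ≤ n, s i ∈ S ∧ s (i + 1) - s i ∈ S

theorem IsStepPath.neg (hS : ∀ x ∈ S, -x ∈ S) {n : ℕ} {s : ℕ → G} (hs : IsStepPath S n s) :
    IsStepPath S n (-s) := fun i hi =>
  ⟨hS _ (hs i hi).1, by simpa only [Pi.neg_apply, neg_sub_neg, neg_sub] using hS _ (hs i hi).2⟩

theorem IsStepPath.reverse (hS : ∀ x ∈ S, -x ∈ S) {n : ℕ} {s : ℕ → G} (hs : IsStepPath S n s)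
    (hlast : s (n + 1) ∈ S) : IsStepPath S n (fun i => s (n + 1 - i)) := by
  intro i hi
  refine ⟨?_, ?_⟩
  · rcases Nat.eq_zero_or_pos i with rfl | hpos
    · simpa using hlast
    · exact (hs _ (by omega)).1
  · simp only
    rw [show n + 1 - (i + 1) = n - i by omega, show n + 1 - i = n - i + 1 by omega, ← neg_sub]
    exact hS _ (hs (n - i) (Nat.sub_le n i)).2

theorem IsStepPath.append {n m : ℕ} {s t : ℕ → G} (hs : IsStepPath S n s)
    (ht : IsStepPath S m t) (hjoin : s (n + 1) = t 0) :
    ∃ u : ℕ → G, IsStepPath S (n + m + 1) u ∧ u 0 = s 0 ∧ u (n + m + 1 + 1) = t (m + 1) := by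
  refine ⟨fun i => if i ≤ n then s i else t (i - (n + 1)), ?_, by simp, ?_⟩
  · intro i hi
    rcases lt_trichotomy i n with hlt | rfl | hgt
    · simpa [hlt.le, Nat.succ_le_of_lt hlt] using hs i hlt.le
    · simpa [← hjoin] using hs i le_rfl
    · have hstep := ht (i - (n + 1)) (by omega)
      rw [show i - (n + 1) + 1 = i + 1 - (n + 1) by omega] at hstep
      simpa [show ¬ i ≤ n by omega, show ¬ i + 1 ≤ n by omega] using hstep
  · simp [show ¬ n + m + 1 + 1 ≤ n by omega, show n + m + 1 + 1 - (n + 1) = m + 1 by omega]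

def StepConnected (S : Set G) (α β : G) : Prop :=
  (β = α ∨ β = -α) ∨
    ∃ (n : ℕ) (s : ℕ → G), IsStepPath S n s ∧ s 0 = α ∧ (s (n + 1) = β ∨ s (n + 1) = -β)

namespace StepConnected

variable {α β μ : G}

theorem refl (S : Set G) (α : G) : StepConnected S α α :=
  Or.inl (Or.inl rfl)

theorem neg_right (h : StepConnected S α β) : StepConnected S α (-β) := by
  rcases h with (h | h) | ⟨n, s, hs, h0, hend⟩
  · exact Or.inl (Or.inr (by rw [h]))
  · exact Or.inl (Or.inl (by rw [h, neg_neg]))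
  · exact Or.inr ⟨n, s, hs, h0, by simpa [or_comm] using hend⟩

theorem neg_left (hS : ∀ x ∈ S, -x ∈ S) (h : StepConnected S α β) : StepConnected S (-α) β := by
  rcases h with (h | h) | ⟨n, s, hs, rfl, hend⟩
  · exact Or.inl (Or.inr (by rw [h, neg_neg]))
  · exact Or.inl (Or.inl h)
  · exact Or.inr ⟨n, -s, hs.neg hS, rfl, by simpa [neg_eq_iff_eq_neg, or_comm] using hend⟩

theorem symm (hS : ∀ x ∈ S, -x ∈ S) (hβ : β ∈ S) (h : StepConnected S α β) :
    StepConnected S β α := by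
  rcases h with (h | h) | ⟨n, s, hs, rfl, hend | hend⟩
  · exact Or.inl (Or.inl h.symm)
  · exact Or.inl (Or.inr (by rw [h, neg_neg]))
  · exact Or.inr ⟨n, _, hs.reverse hS (hend ▸ hβ), by simpa using hend, Or.inl (by simp)⟩
  · exact Or.inr ⟨n, _, (hs.neg hS).reverse hS (by simpa [hend] using hβ), by simp [hend],
      Or.inr (by simp)⟩

theorem trans (hS : ∀ x ∈ S, -x ∈ S) (h₁ : StepConnected S α β) (h₂ : StepConnected S β μ) :
    StepConnected S α μ := by
  rcases h₁ with (rfl | rfl) | ⟨n, s, hs, rfl, hend⟩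
  · exact h₂
  · simpa using h₂.neg_left hS
  rcases h₂ with (rfl | rfl) | ⟨m, t, ht, rfl, htend⟩
  · exact Or.inr ⟨n, s, hs, rfl, hend⟩
  · exact neg_right (Or.inr ⟨n, s, hs, rfl, hend⟩)
  rcases hend with hend | hend
  · obtain ⟨u, hu, hu0, hu1⟩ := hs.append ht hend
    exact Or.inr ⟨_, u, hu, hu0, by rwa [hu1]⟩
  · obtain ⟨u, hu, hu0, hu1⟩ := hs.append (ht.neg hS) hend
    exact Or.inr ⟨_, u, hu, hu0, by rcases htend with h | h <;> simp [hu1, h]⟩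

end StepConnected

def increments (s : ℕ → G) : ℕ → G
  | 0 => s 0
  | i + 1 => s (i + 1) - s i

theorem sum_range_succ_increments (s : ℕ → G) (i : ℕ) :
    ∑ j ∈ range (i + 1), increments s j = s i := by
  induction i with
  | zero => simp [increments]
  | succ i ih => rw [sum_range_succ, ih, increments, add_sub_cancel]

theorem exists_summands_iff_exists_isStepPath {n : ℕ} {α β : G} :
    (∃ σ : ℕ → G, (∀ i ≤ n + 1, σ i ∈ S) ∧ σ 0 = α ∧
        (∀ i, 1 ≤ i → i ≤ n → (∑ j ∈ range (i + 1), σ j) ∈ S) ∧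
        ((∑ j ∈ range (n + 2), σ j) = β ∨ (∑ j ∈ range (n + 2), σ j) = -β)) ↔
      ∃ s : ℕ → G, IsStepPath S n s ∧ s 0 = α ∧ (s (n + 1) = β ∨ s (n + 1) = -β) := by
  constructor
  · rintro ⟨σ, hσ, h0, hmid, hend⟩
    refine ⟨fun i => ∑ j ∈ range (i + 1), σ j, fun i hi => ⟨?_, ?_⟩, by simpa using h0, hend⟩
    · rcases Nat.eq_zero_or_pos i with rfl | hpos
      · simpa using hσ 0 (Nat.zero_le _)
      · exact hmid i hpos hi
    · simpa [sum_range_succ _ (i + 1)] using hσ (i + 1) (by omega)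
  · rintro ⟨s, hs, h0, hend⟩
    refine ⟨increments s, fun i hi => ?_, h0, fun i _ hi => ?_, ?_⟩
    · cases i with
      | zero => exact (hs 0 (Nat.zero_le _)).1
      | succ i => exact (hs i (by omega)).2
    · rw [sum_range_succ_increments]; exact (hs i hi).1
    · rwa [sum_range_succ_increments]

end StepPath

namespace HomLieRinehart

variable (R : HomLieRinehart k A L) (H : Submodule k L)

theorem neg_mem_pmΛ_union_pmΓ : ∀ x ∈ R.pmΛ H ∪ R.pmΓ H, -x ∈ R.pmΛ H ∪ R.pmΓ H := by
  simp only [pmΛ, pmΓ, Set.mem_union, Set.mem_ofPred_eq, neg_neg]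
  tauto

theorem wConnected_iff_stepConnected {α β : L → k} :
    R.WConnected H α β ↔ StepConnected (R.pmΛ H ∪ R.pmΓ H) α β :=
  or_congr_right (exists_congr fun _ => exists_summands_iff_exists_isStepPath)

end HomLieRinehart

theorem wConnected_equivalence_general (R : HomLieRinehart k A L) (H : Submodule k L) :
    (∀ α ∈ R.Λset H, R.WConnected H α α) ∧
    (∀ α ∈ R.Λset H, ∀ β ∈ R.Λset H, R.WConnected H α β → R.WConnected H β α) ∧
    (∀ α ∈ R.Λset H, ∀ β ∈ R.Λset H, ∀ μ ∈ R.Λset H,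
      R.WConnected H α β → R.WConnected H β μ → R.WConnected H α μ) := by
  have hS := R.neg_mem_pmΛ_union_pmΓ H
  simp only [wConnected_iff_stepConnected]
  exact ⟨fun α _ => .refl _ α,
    fun _ _ _ hβ h => h.symm hS (Or.inl (Or.inl hβ)),
    fun _ _ _ _ _ _ h₁ h₂ => h₁.trans hS h₂⟩

/-- Proposition 4.2: the connection relation `≈` is an equivalence relation on `Λ`. -/
theorem wConnected_equivalence (R : HomLieRinehart k A L) (H : Submodule k L)
    (hs : R.IsSplit H) :
    (∀ α ∈ R.Λset H, R.WConnected H α α) ∧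
    (∀ α ∈ R.Λset H, ∀ β ∈ R.Λset H, R.WConnected H α β → R.WConnected H β α) ∧
    (∀ α ∈ R.Λset H, ∀ β ∈ R.Λset H, ∀ μ ∈ R.Λset H,
      R.WConnected H α β → R.WConnected H β μ → R.WConnected H α μ) :=
  wConnected_equivalence_general R H
end
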